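/- (Theorem 1 of the paper, for undirected graphs.) Let G be a simple graph on a finite vertex set V with a symmetric edge sign function σ with values in {+1, −1}. Then every cycle of G is positive if and only if for every pair of vertices u, v, all paths from u to v have the same sign (the product of edge signs along the path). -/

import Mathlib

/-!
If every cycle is positive, then removing a closed detour from a walk does not change its sign:
such a detour, together with the edge that enters it, closes either a cycle or a digon `u v u`,
and both are positive. Hence a walk has the sign of its bypass path, a closed walk is positive,
and two paths `p`, `q` from `u` to `v` agree in sign because `p ++ q⁻¹` is closed.
Conversely, a cycle `u v ⋯ u` compares the path `v ⋯ u` with the single edge `u v`.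
-/

/-- The sign of a walk in a signed graph: the product of the edge signs along it. -/
def walkSign {V : Type*} {G : SimpleGraph V} (σ : V → V → ℤ) {u v : V}
    (w : G.Walk u v) : ℤ :=
  (w.darts.map fun d => σ d.fst d.snd).prod

namespace SimpleGraph.Walk

variable {V : Type*} {G : SimpleGraph V} {σ : V → V → ℤ}

@[simp]
lemma walkSign_nil {u : V} : walkSign σ (nil : G.Walk u u) = 1 := rfl

@[simp]
lemma walkSign_cons {u v w : V} (h : G.Adj u v) (p : G.Walk v w) :
    walkSign σ (cons h p) = σ u v * walkSign σ p := by
  simp [walkSign]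

lemma walkSign_append {u v w : V} (p : G.Walk u v) (q : G.Walk v w) :
    walkSign σ (p.append q) = walkSign σ p * walkSign σ q := by
  simp [walkSign, darts_append]

lemma walkSign_reverse (hsymm : ∀ u v, G.Adj u v → σ u v = σ v u)
    {u v : V} (p : G.Walk u v) : walkSign σ p.reverse = walkSign σ p := by
  have hsymm_dart : ((fun d : G.Dart => σ d.fst d.snd) ∘ Dart.symm) =
      fun d : G.Dart => σ d.fst d.snd :=
    funext fun d => hsymm _ _ d.symm.adj
  rw [walkSign, darts_reverse, List.map_reverse, List.prod_reverse, List.map_map, hsymm_dart]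
  rfl

lemma walkSign_cons_eq_one_of_isPath (hsymm : ∀ u v, G.Adj u v → σ u v = σ v u)
    (hsign : ∀ u v, G.Adj u v → σ u v = 1 ∨ σ u v = -1)
    (hcyc : ∀ (u : V) (w : G.Walk u u), w.IsCycle → walkSign σ w = 1)
    {u v : V} (h : G.Adj u v) {q : G.Walk v u} (hq : q.IsPath) :
    walkSign σ (cons h q) = 1 := by
  by_cases he : s(u, v) ∈ q.edges
  · rw [hq.eq_adj_toWalk_of_mem_edges (Sym2.eq_swap ▸ he)]
    simpa [← hsymm u v h] using Int.isUnit_mul_self (Int.isUnit_iff.mpr (hsign u v h))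
  · exact hcyc u _ ((cons_isCycle_iff q h).mpr ⟨hq, he⟩)

lemma walkSign_bypass [DecidableEq V] (hsymm : ∀ u v, G.Adj u v → σ u v = σ v u)
    (hsign : ∀ u v, G.Adj u v → σ u v = 1 ∨ σ u v = -1)
    (hcyc : ∀ (u : V) (w : G.Walk u u), w.IsCycle → walkSign σ w = 1)
    {u v : V} (p : G.Walk u v) : walkSign σ p.bypass = walkSign σ p := by
  induction p with
  | nil => rfl
  | @cons u v w h p ih =>
    rw [bypass]
    split_ifs with hu
    · have hloop : walkSign σ (cons h (p.bypass.takeUntil u hu)) = 1 :=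
        walkSign_cons_eq_one_of_isPath hsymm hsign hcyc h (p.bypass_isPath.takeUntil hu)
      have hsplit := congrArg (walkSign σ) (p.bypass.take_spec hu)
      rw [walkSign_append] at hsplit
      rw [walkSign_cons, ← ih, ← hsplit, ← mul_assoc, ← walkSign_cons h, hloop, one_mul]
    · rw [walkSign_cons, walkSign_cons, ih]

lemma walkSign_eq_one_of_forall_isCycle (hsymm : ∀ u v, G.Adj u v → σ u v = σ v u)
    (hsign : ∀ u v, G.Adj u v → σ u v = 1 ∨ σ u v = -1)
    (hcyc : ∀ (u : V) (w : G.Walk u u), w.IsCycle → walkSign σ w = 1)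
    {u : V} (w : G.Walk u u) : walkSign σ w = 1 := by
  classical
  have hnil : w.bypass = nil := eq_nil_iff_nil.mpr (isPath_iff_nil.mp w.bypass_isPath)
  rw [← walkSign_bypass hsymm hsign hcyc, hnil, walkSign_nil]

end SimpleGraph.Walk

open SimpleGraph.Walk in
theorem strong_structure_paths_general {V : Type*}
    (G : SimpleGraph V) (σ : V → V → ℤ)
    (hsymm : ∀ u v, G.Adj u v → σ u v = σ v u)
    (hsign : ∀ u v, G.Adj u v → σ u v = 1 ∨ σ u v = -1) :
    (∀ (u : V) (w : G.Walk u u), w.IsCycle → walkSign σ w = 1) ↔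
      ∀ (u v : V) (p q : G.Walk u v), p.IsPath → q.IsPath →
        walkSign σ p = walkSign σ q := by
  constructor
  · intro hcyc u v p q _ _
    have hclosed := walkSign_eq_one_of_forall_isCycle hsymm hsign hcyc (p.append q.reverse)
    rw [walkSign_append, walkSign_reverse hsymm] at hclosed
    exact Int.eq_of_mul_eq_one hclosed
  · rintro hpath u (_ | @⟨_, v, _, h, p⟩) hw
    · exact absurd hw not_isCycle_nil
    obtain ⟨hp, -⟩ := (cons_isCycle_iff p h).mp hw
    have hedge : σ u v = walkSign σ p := by
      simpa [walkSign_reverse hsymm] using hpath _ _ h.toWalk p.reverse (by simp [h.ne]) hp.reverse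
    rw [walkSign_cons, ← hedge]
    exact Int.isUnit_mul_self (Int.isUnit_iff.mpr (hsign _ _ h))

/-- Every cycle of a signed graph is positive iff for every pair of vertices all paths
joining them have the same sign. -/
theorem strong_structure_paths {V : Type*} [Fintype V]
    (G : SimpleGraph V) (σ : V → V → ℤ)
    (hsymm : ∀ u v, G.Adj u v → σ u v = σ v u)
    (hsign : ∀ u v, G.Adj u v → σ u v = 1 ∨ σ u v = -1) :
    (∀ (u : V) (w : G.Walk u u), w.IsCycle → walkSign σ w = 1) ↔
      ∀ (u v : V) (p q : G.Walk u v), p.IsPath → q.IsPath →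
        walkSign σ p = walkSign σ q :=
  strong_structure_paths_general G σ hsymm hsign
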